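/- arXiv:1712.00747 — 2 statements merged into one kernel-verified Lean document; each statement's English description precedes it below -/
import Mathlib

section
/- Let K = 𝔽_q be a finite field and Y ⊆ (𝔽_q*)^n a subset of the torus (viewed as points of a complete simplicial toric variety X over 𝔽_q). The vanishing ideal I(Y) in the Cox ring S is a lattice ideal if and only if Y is a subgroup of the torus. -/
open MvPolynomial

/-- The exponent vector of the positive part `m⁺` of an integer vector. -/
noncomputable def expOf {r : ℕ} (m : Fin r → ℤ) : Fin r →₀ ℕ :=
  Finsupp.equivFunOnFinite.symm fun i => (m i).toNat

/-- The binomial `F_m = x^{m⁺} - x^{m⁻}`. -/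
noncomputable def latticeBinomial (K : Type*) [Field K] {r : ℕ} (m : Fin r → ℤ) :
    MvPolynomial (Fin r) K :=
  monomial (expOf m) 1 - monomial (expOf (-m)) 1

/-- The lattice ideal `I_L` of a lattice `L ⊆ ℤ^r`. -/
noncomputable def latticeIdeal (K : Type*) [Field K] {r : ℕ} (L : AddSubgroup (Fin r → ℤ)) :
    Ideal (MvPolynomial (Fin r) K) :=
  Ideal.span {f | ∃ m ∈ L, f = latticeBinomial K m}

/-- Degree of a monomial exponent under the grading `β`. -/
def degOf {A : Type*} [AddCommGroup A] {r : ℕ} (β : (Fin r → ℤ) →+ A) (d : Fin r →₀ ℕ) : A :=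
  β fun i => (d i : ℤ)

/-- `f` is homogeneous of degree `α` with respect to `β`. -/
def IsHomogOf {A : Type*} [AddCommGroup A] {K : Type*} [Field K] {r : ℕ}
    (β : (Fin r → ℤ) →+ A) (α : A) (f : MvPolynomial (Fin r) K) : Prop :=
  ∀ d ∈ f.support, degOf β d = α

/-- `f` is homogeneous with respect to `β`. -/
def IsHomog {A : Type*} [AddCommGroup A] {K : Type*} [Field K] {r : ℕ}
    (β : (Fin r → ℤ) →+ A) (f : MvPolynomial (Fin r) K) : Prop :=
  ∃ α, IsHomogOf β α f

/-- An ideal is homogeneous if it is generated by homogeneous polynomials. -/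
def IsHomogIdeal {A : Type*} [AddCommGroup A] {K : Type*} [Field K] {r : ℕ}
    (β : (Fin r → ℤ) →+ A) (I : Ideal (MvPolynomial (Fin r) K)) : Prop :=
  ∃ S : Set (MvPolynomial (Fin r) K), (∀ f ∈ S, IsHomog β f) ∧ I = Ideal.span S

/-- `x^m(P) = ∏ᵢ Pᵢ^{mᵢ}` as a unit. -/
def charEval {K : Type*} [Field K] {r : ℕ} (P : Fin r → Kˣ) (m : Fin r → ℤ) : Kˣ :=
  ∏ i, (P i) ^ (m i)

/-- The group `G = Ker π`, consisting of the points where all characters coming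
from `Ker β` take the value `1`. -/
def torusG {K : Type*} [Field K] {A : Type*} [AddCommGroup A] {r : ℕ}
    (β : (Fin r → ℤ) →+ A) : Subgroup (Fin r → Kˣ) where
  carrier := {g | ∀ m ∈ β.ker, charEval g m = 1}
  one_mem' := by intro m hm; simp [charEval]
  mul_mem' := by
    intro a b ha hb m hm
    have : charEval (a * b) m = charEval a m * charEval b m := by
      simp [charEval, mul_zpow, Finset.prod_mul_distrib]
    rw [this, ha m hm, hb m hm, one_mul]
  inv_mem' := by
    intro a ha m hm
    have : charEval a⁻¹ m = (charEval a m)⁻¹ := by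
      simp [charEval, inv_zpow]
    rw [this, ha m hm, inv_one]

/-- The vanishing ideal of a set of torus points, generated by the homogeneous
polynomials vanishing on it. -/
noncomputable def vanishingIdeal {K : Type*} [Field K] {A : Type*} [AddCommGroup A] {r : ℕ}
    (β : (Fin r → ℤ) →+ A) (Y : Set ((Fin r → Kˣ) ⧸ torusG (K := K) β)) :
    Ideal (MvPolynomial (Fin r) K) :=
  Ideal.span {f | IsHomog β f ∧
    ∀ P : Fin r → Kˣ, (QuotientGroup.mk P ∈ Y) → eval (fun i => (P i : K)) f = 0}

/-- Height of an ideal: infimum of heights of primes containing it. -/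
noncomputable def idealHeight {R : Type*} [CommRing R] (I : Ideal R) : ℕ∞ :=
  ⨅ (p : PrimeSpectrum R) (_ : I ≤ p.asIdeal), Order.height p

/-- A homogeneous ideal is a complete intersection if it is generated by a regular
sequence of homogeneous polynomials whose length is the height of the ideal. -/
def IsCompleteIntersection {K : Type*} [Field K] {A : Type*} [AddCommGroup A] {r : ℕ}
    (β : (Fin r → ℤ) →+ A) (I : Ideal (MvPolynomial (Fin r) K)) : Prop :=
  ∃ (k : ℕ) (f : Fin k → MvPolynomial (Fin r) K),
    (∀ i, IsHomog β (f i)) ∧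
    RingTheory.Sequence.IsRegular (MvPolynomial (Fin r) K) (List.ofFn f) ∧
    I = Ideal.span (Set.range f) ∧ (k : ℕ∞) = idealHeight I

/-! ### Auxiliary development -/

section Aux

variable {K : Type*} [Field K] {A : Type*} [AddCommGroup A] {r : ℕ}

lemma expOf_apply (m : Fin r → ℤ) (i : Fin r) : expOf m i = (m i).toNat := rfl

/-- `x^d(P) = ∏ᵢ Pᵢ^{dᵢ}` as a unit, for natural exponents. -/
noncomputable def chNat (P : Fin r → Kˣ) (d : Fin r →₀ ℕ) : Kˣ := ∏ i, P i ^ (d i)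

lemma chNat_coe (P : Fin r → Kˣ) (d : Fin r →₀ ℕ) :
    ((chNat P d : Kˣ) : K) = ∏ i, ((P i : K)) ^ (d i) := by
  rw [chNat, Units.coe_prod]
  simp

lemma eval_monomial' (P : Fin r → Kˣ) (d : Fin r →₀ ℕ) (c : K) :
    eval (fun i => (P i : K)) (monomial d c) = c * ((chNat P d : Kˣ) : K) := by
  rw [eval_monomial, chNat_coe, Finsupp.prod_pow]

lemma charEval_zero (P : Fin r → Kˣ) : charEval P (0 : Fin r → ℤ) = 1 := by
  simp [charEval]

lemma charEval_add (P : Fin r → Kˣ) (m n : Fin r → ℤ) :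
    charEval P (m + n) = charEval P m * charEval P n := by
  simp [charEval, zpow_add, Finset.prod_mul_distrib]

lemma charEval_neg (P : Fin r → Kˣ) (m : Fin r → ℤ) :
    charEval P (-m) = (charEval P m)⁻¹ := by
  simp [charEval, zpow_neg]

lemma charEval_mul_left (P Q : Fin r → Kˣ) (m : Fin r → ℤ) :
    charEval (P * Q) m = charEval P m * charEval Q m := by
  simp [charEval, mul_zpow, Finset.prod_mul_distrib]

lemma charEval_inv_left (P : Fin r → Kˣ) (m : Fin r → ℤ) :
    charEval P⁻¹ m = (charEval P m)⁻¹ := by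
  simp [charEval, inv_zpow]

lemma chNat_expOf (P : Fin r → Kˣ) (m : Fin r → ℤ) :
    chNat P (expOf m) = charEval P m * chNat P (expOf (-m)) := by
  rw [charEval, chNat, chNat, ← Finset.prod_mul_distrib]
  refine Finset.prod_congr rfl fun i _ => ?_
  have h1 : ((expOf m i : ℤ)) = m i + ((expOf (-m) i : ℤ)) := by
    simp only [expOf_apply, Pi.neg_apply]; omega
  calc P i ^ (expOf m i) = P i ^ ((expOf m i : ℤ)) := by rw [zpow_natCast]
    _ = P i ^ (m i + ((expOf (-m) i : ℤ))) := by rw [h1]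
    _ = P i ^ (m i) * P i ^ ((expOf (-m) i : ℤ)) := by rw [zpow_add]
    _ = P i ^ (m i) * P i ^ (expOf (-m) i) := by rw [zpow_natCast]

/-- A generalized binomial `x^{m⁺} - c·x^{m⁻}`. -/
noncomputable def genBinomial (K : Type*) [Field K] {r : ℕ} (m : Fin r → ℤ) (c : Kˣ) :
    MvPolynomial (Fin r) K :=
  monomial (expOf m) 1 - monomial (expOf (-m)) ((c : Kˣ) : K)

lemma latticeBinomial_eq_genBinomial (m : Fin r → ℤ) :
    latticeBinomial K m = genBinomial K m 1 := by
  rw [latticeBinomial, genBinomial, Units.val_one]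

lemma eval_genBinomial (P : Fin r → Kˣ) (m : Fin r → ℤ) (c : Kˣ) :
    eval (fun i => (P i : K)) (genBinomial K m c)
      = ((chNat P (expOf (-m)) : Kˣ) : K) * (((charEval P m : Kˣ) : K) - (c : K)) := by
  rw [genBinomial, map_sub, eval_monomial', eval_monomial', chNat_expOf]
  push_cast
  ring

lemma eval_genBinomial_eq_zero_iff (P : Fin r → Kˣ) (m : Fin r → ℤ) (c : Kˣ) :
    eval (fun i => (P i : K)) (genBinomial K m c) = 0 ↔ charEval P m = c := by
  rw [eval_genBinomial, mul_eq_zero]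
  constructor
  · rintro (h | h)
    · exact absurd h (Units.ne_zero _)
    · exact Units.ext (sub_eq_zero.mp h)
  · intro h
    right
    rw [h, sub_self]

lemma eval_latticeBinomial_eq_zero_iff (P : Fin r → Kˣ) (m : Fin r → ℤ) :
    eval (fun i => (P i : K)) (latticeBinomial K m) = 0 ↔ charEval P m = 1 := by
  rw [latticeBinomial_eq_genBinomial, eval_genBinomial_eq_zero_iff]

lemma charEval_natDiff_eq_one (P : Fin r → Kˣ) {d e : Fin r →₀ ℕ}
    (h : chNat P d = chNat P e) :
    charEval P (fun i => (d i : ℤ) - (e i : ℤ)) = 1 := by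
  have key : charEval P (fun i => (d i : ℤ) - (e i : ℤ)) = chNat P d * (chNat P e)⁻¹ := by
    rw [charEval, chNat, chNat, ← Finset.prod_inv_distrib, ← Finset.prod_mul_distrib]
    refine Finset.prod_congr rfl fun i _ => ?_
    rw [← zpow_natCast (P i) (d i), ← zpow_natCast (P i) (e i), ← zpow_neg, ← zpow_add]
    ring_nf
  rw [key, h, mul_inv_cancel]

/-! #### Homogeneity lemmas -/

lemma degOf_add (β : (Fin r → ℤ) →+ A) (d e : Fin r →₀ ℕ) :
    degOf β (d + e) = degOf β d + degOf β e := by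
  have h : (fun i => ((d + e) i : ℤ)) = (fun i => (d i : ℤ)) + (fun i => (e i : ℤ)) := by
    funext i
    simp
  rw [degOf, degOf, degOf, h, map_add]

lemma degOf_expOf (β : (Fin r → ℤ) →+ A) (m : Fin r → ℤ) :
    degOf β (expOf m) = β m + degOf β (expOf (-m)) := by
  rw [degOf, degOf, ← map_add]
  congr 1
  funext i
  simp only [expOf_apply, Pi.add_apply, Pi.neg_apply]
  omega

lemma isHomogOf_monomial (β : (Fin r → ℤ) →+ A) (d : Fin r →₀ ℕ) (c : K) :
    IsHomogOf β (degOf β d) (monomial d c) := by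
  intro e he
  have := MvPolynomial.support_monomial_subset he
  rw [Finset.mem_singleton] at this
  rw [this]

lemma isHomogOf_mul (β : (Fin r → ℤ) →+ A) {a b : A} {f g : MvPolynomial (Fin r) K}
    (hf : IsHomogOf β a f) (hg : IsHomogOf β b g) : IsHomogOf β (a + b) (f * g) := by
  classical
  intro d hd
  have := MvPolynomial.support_mul f g hd
  rw [Finset.mem_add] at this
  obtain ⟨u, hu, v, hv, rfl⟩ := this
  rw [degOf_add, hf u hu, hg v hv]

lemma isHomog_mul (β : (Fin r → ℤ) →+ A) {f g : MvPolynomial (Fin r) K}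
    (hf : IsHomog β f) (hg : IsHomog β g) : IsHomog β (f * g) := by
  obtain ⟨a, ha⟩ := hf
  obtain ⟨b, hb⟩ := hg
  exact ⟨a + b, isHomogOf_mul β ha hb⟩

lemma isHomog_one (β : (Fin r → ℤ) →+ A) : IsHomog β (1 : MvPolynomial (Fin r) K) := by
  refine ⟨0, fun d hd => ?_⟩
  have h1 : (1 : MvPolynomial (Fin r) K) = monomial 0 1 := by simp
  rw [h1] at hd
  have := MvPolynomial.support_monomial_subset hd
  rw [Finset.mem_singleton] at this
  rw [this, degOf]
  have h0 : (fun i => (((0 : Fin r →₀ ℕ)) i : ℤ)) = (0 : Fin r → ℤ) := by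
    funext i
    simp
  rw [h0, map_zero]

lemma isHomog_prod (β : (Fin r → ℤ) →+ A) {ι : Type*} (s : Finset ι)
    (g : ι → MvPolynomial (Fin r) K) (h : ∀ i ∈ s, IsHomog β (g i)) :
    IsHomog β (∏ i ∈ s, g i) :=
  Finset.prod_induction g (IsHomog β) (fun _ _ => isHomog_mul β) (isHomog_one β) h

lemma isHomogOf_genBinomial (β : (Fin r → ℤ) →+ A) (m : Fin r → ℤ) (c : Kˣ)
    (hm : β m = 0) : IsHomogOf β (degOf β (expOf m)) (genBinomial K m c) := by
  classical
  intro d hd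
  have hsub := MvPolynomial.support_sub (Fin r)
    (monomial (expOf m) (1 : K)) (monomial (expOf (-m)) ((c : Kˣ) : K)) hd
  rw [Finset.mem_union] at hsub
  have hdeg : degOf β (expOf m) = degOf β (expOf (-m)) := by
    rw [degOf_expOf β m, hm, zero_add]
  rcases hsub with h | h
  · have := MvPolynomial.support_monomial_subset h
    rw [Finset.mem_singleton] at this
    rw [this]
  · have := MvPolynomial.support_monomial_subset h
    rw [Finset.mem_singleton] at this
    rw [this, hdeg]

lemma isHomog_latticeBinomial (β : (Fin r → ℤ) →+ A) (m : Fin r → ℤ) (hm : β m = 0) :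
    IsHomog β (latticeBinomial K m) := by
  rw [latticeBinomial_eq_genBinomial]
  exact ⟨degOf β (expOf m), isHomogOf_genBinomial β m 1 hm⟩

/-! #### Vanishing on spans -/

lemma eval_eq_zero_of_mem_span {S : Set (MvPolynomial (Fin r) K)} {x : Fin r → K}
    (hS : ∀ g ∈ S, eval x g = 0) {f : MvPolynomial (Fin r) K} (hf : f ∈ Ideal.span S) :
    eval x f = 0 := by
  have hle : Ideal.span S ≤ RingHom.ker (eval x) :=
    Ideal.span_le.mpr fun g hg => by rw [SetLike.mem_coe, RingHom.mem_ker]; exact hS g hg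
  exact RingHom.mem_ker.mp (hle hf)

/-! #### Key factorization -/

lemma sub_monomial_mem (L : AddSubgroup (Fin r → ℤ)) (d e : Fin r →₀ ℕ)
    (hm : (fun i => (d i : ℤ) - (e i : ℤ)) ∈ L) :
    (monomial d (1 : K) - monomial e 1) ∈ latticeIdeal K L := by
  classical
  set m : Fin r → ℤ := fun i => (d i : ℤ) - (e i : ℤ) with hmdef
  set c : Fin r →₀ ℕ := Finsupp.equivFunOnFinite.symm (fun i => d i - (d i - e i)) with hcdef
  have hc : ∀ i, c i = d i - (d i - e i) := fun i => rfl
  have h1 : c + expOf m = d := by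
    ext i
    rw [Finsupp.add_apply, hc, expOf_apply]
    simp only [hmdef]
    omega
  have h2 : c + expOf (-m) = e := by
    ext i
    rw [Finsupp.add_apply, hc, expOf_apply]
    simp only [hmdef, Pi.neg_apply]
    omega
  have key : monomial d (1 : K) - monomial e 1 = monomial c 1 * latticeBinomial K m := by
    rw [latticeBinomial, mul_sub, monomial_mul, monomial_mul, h1, h2, one_mul]
  rw [key]
  exact Ideal.mul_mem_left _ _ (Ideal.subset_span ⟨m, hm, rfl⟩)

/-! #### The lattice of a torus subgroup and the annihilator subgroup of a lattice -/

/-- The lattice associated to a subgroup `T` of `(Kˣ)^r`. -/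
def Lof (β : (Fin r → ℤ) →+ A) (T : Subgroup (Fin r → Kˣ)) : AddSubgroup (Fin r → ℤ) where
  carrier := {m | β m = 0 ∧ ∀ P ∈ T, charEval P m = 1}
  zero_mem' := ⟨map_zero β, fun P _ => charEval_zero P⟩
  add_mem' := by
    rintro a b ⟨ha1, ha2⟩ ⟨hb1, hb2⟩
    refine ⟨by rw [map_add, ha1, hb1, add_zero], fun P hP => ?_⟩
    rw [charEval_add, ha2 P hP, hb2 P hP, one_mul]
  neg_mem' := by
    rintro a ⟨ha1, ha2⟩
    refine ⟨by rw [map_neg, ha1, neg_zero], fun P hP => ?_⟩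
    rw [charEval_neg, ha2 P hP, inv_one]

lemma mem_Lof {β : (Fin r → ℤ) →+ A} {T : Subgroup (Fin r → Kˣ)} {m : Fin r → ℤ} :
    m ∈ Lof β T ↔ β m = 0 ∧ ∀ P ∈ T, charEval P m = 1 := Iff.rfl

/-- The annihilator subgroup of a lattice `L`. -/
def annSub (K : Type*) [Field K] {r : ℕ} (L : AddSubgroup (Fin r → ℤ)) :
    Subgroup (Fin r → Kˣ) where
  carrier := {g | ∀ m ∈ L, charEval g m = 1}
  one_mem' := by intro m hm; simp [charEval]
  mul_mem' := by
    intro a b ha hb m hm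
    rw [charEval_mul_left, ha m hm, hb m hm, one_mul]
  inv_mem' := by
    intro a ha m hm
    rw [charEval_inv_left, ha m hm, inv_one]

lemma mem_annSub {L : AddSubgroup (Fin r → ℤ)} {P : Fin r → Kˣ} :
    P ∈ annSub K L ↔ ∀ m ∈ L, charEval P m = 1 := Iff.rfl

lemma mem_torusG {β : (Fin r → ℤ) →+ A} {P : Fin r → Kˣ} :
    P ∈ torusG (K := K) β ↔ ∀ m ∈ β.ker, charEval P m = 1 := Iff.rfl

/-! #### The monomial characters -/

/-- The character of `(Kˣ)^r` given by a monomial exponent. -/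
noncomputable def chMon (K : Type*) [Field K] {r : ℕ} (d : Fin r →₀ ℕ) :
    (Fin r → Kˣ) →* K where
  toFun P := ((chNat P d : Kˣ) : K)
  map_one' := by simp [chNat]
  map_mul' a b := by
    have h : chNat (a * b) d = chNat a d * chNat b d := by
      simp [chNat, Pi.mul_apply, mul_pow, Finset.prod_mul_distrib]
    show ((chNat (a * b) d : Kˣ) : K) = ((chNat a d : Kˣ) : K) * ((chNat b d : Kˣ) : K)
    rw [h, Units.val_mul]

lemma chMon_apply (d : Fin r →₀ ℕ) (P : Fin r → Kˣ) :
    chMon K d P = ((chNat P d : Kˣ) : K) := rfl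

end Aux

section Hard

variable {K : Type*} [Field K] {A : Type*} [AddCommGroup A] {r : ℕ}

/-- The hard inclusion: a homogeneous polynomial vanishing on a subgroup `T` of the
torus lies in the lattice ideal of `Lof β T`. -/
lemma mem_latticeIdeal_of_homog_vanishing (β : (Fin r → ℤ) →+ A)
    (T : Subgroup (Fin r → Kˣ)) {α : A} {f : MvPolynomial (Fin r) K}
    (hf : IsHomogOf β α f)
    (hvan : ∀ P : Fin r → Kˣ, P ∈ T → eval (fun i => (P i : K)) f = 0) :
    f ∈ latticeIdeal K (Lof β T) := by
  classical
  set χ : (Fin r →₀ ℕ) → (T →* K) := fun d => (chMon K d).comp T.subtype with hχdef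
  set g : (T →* K) → (Fin r →₀ ℕ) :=
    fun ψ => if h : ∃ d ∈ f.support, χ d = ψ then h.choose else 0 with hgdef
  set ρ : (Fin r →₀ ℕ) → (Fin r →₀ ℕ) := fun d => g (χ d) with hρdef
  have hrep : ∀ d ∈ f.support, ρ d ∈ f.support ∧ χ (ρ d) = χ d := by
    intro d hd
    have hex : ∃ e ∈ f.support, χ e = χ d := ⟨d, hd, rfl⟩
    have hspec := hex.choose_spec
    have : ρ d = hex.choose := by rw [hρdef]; simp only [hgdef, dif_pos hex]
    rw [this]
    exact ⟨hspec.1, hspec.2⟩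
  -- membership of the differences in the lattice
  have hmem : ∀ d ∈ f.support, (fun i => (d i : ℤ) - ((ρ d) i : ℤ)) ∈ Lof β T := by
    intro d hd
    obtain ⟨hρs, hρχ⟩ := hrep d hd
    refine mem_Lof.mpr ⟨?_, ?_⟩
    · have h1 : β (fun i => (d i : ℤ) - ((ρ d) i : ℤ))
          = degOf β d - degOf β (ρ d) := by
        rw [degOf, degOf, ← map_sub]
        congr 1
      rw [h1, hf d hd, hf _ hρs, sub_self]
    · intro P hP
      have hpt := DFunLike.congr_fun hρχ (⟨P, hP⟩ : T)
      have hun : chNat P d = chNat P (ρ d) := by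
        apply Units.ext
        have : χ (ρ d) (⟨P, hP⟩ : T) = ((chNat P (ρ d) : Kˣ) : K) := rfl
        rw [this] at hpt
        have h2 : χ d (⟨P, hP⟩ : T) = ((chNat P d : Kˣ) : K) := rfl
        rw [h2] at hpt
        exact hpt.symm
      exact charEval_natDiff_eq_one P hun
  -- the fiberwise coefficient sums vanish, by linear independence of characters
  have hzero : ∀ ψ ∈ f.support.image χ,
      (∑ d ∈ f.support.filter (fun d => χ d = ψ), coeff d f) = 0 := by
    have hsum : (∑ ψ ∈ f.support.image χ,
        (∑ d ∈ f.support.filter (fun d => χ d = ψ), coeff d f) •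
          ((ψ : T → K))) = (0 : T → K) := by
      funext x
      have h0 := hvan (x : Fin r → Kˣ) x.2
      rw [eval_eq'] at h0
      simp only [Finset.sum_apply, Pi.smul_apply, smul_eq_mul, Pi.zero_apply]
      rw [← h0]
      rw [← Finset.sum_fiberwise_of_maps_to (fun d hd => Finset.mem_image_of_mem χ hd)
        (fun d => coeff d f * ∏ i, (((x : Fin r → Kˣ) i : K)) ^ d i)]
      refine Finset.sum_congr rfl fun ψ hψ => ?_
      rw [Finset.sum_mul]
      refine Finset.sum_congr rfl fun d hd => ?_
      rw [Finset.mem_filter] at hd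
      rw [← hd.2]
      congr 1
      rw [hχdef]
      simp only [MonoidHom.comp_apply, chMon_apply, chNat_coe]
      rfl
    intro ψ hψ
    exact linearIndependent_iff'.mp (linearIndependent_monoidHom T K)
      (f.support.image χ) _ hsum ψ hψ
  -- decomposition of f
  have hdecomp : f = (∑ d ∈ f.support,
        (monomial d (1 : K) - monomial (ρ d) 1) * C (coeff d f))
      + ∑ d ∈ f.support, monomial (ρ d) (coeff d f) := by
    rw [← Finset.sum_add_distrib]
    conv_lhs => rw [f.as_sum]
    refine Finset.sum_congr rfl fun d _ => ?_
    have e1 : monomial d (1 : K) * C (coeff d f) = monomial d (coeff d f) := by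
      rw [C_apply, monomial_mul, add_zero, one_mul]
    have e2 : monomial (ρ d) (1 : K) * C (coeff d f) = monomial (ρ d) (coeff d f) := by
      rw [C_apply, monomial_mul, add_zero, one_mul]
    rw [sub_mul, e1, e2]
    ring
  -- second sum vanishes
  have h2 : (∑ d ∈ f.support, (monomial (ρ d) (coeff d f) : MvPolynomial (Fin r) K)) = 0 := by
    rw [← Finset.sum_fiberwise_of_maps_to (fun d hd => Finset.mem_image_of_mem χ hd)
      (fun d => (monomial (ρ d) (coeff d f) : MvPolynomial (Fin r) K))]
    refine Finset.sum_eq_zero fun ψ hψ => ?_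
    have hconst : ∀ d ∈ f.support.filter (fun d => χ d = ψ), ρ d = g ψ := by
      intro d hd
      rw [Finset.mem_filter] at hd
      rw [hρdef]
      simp only [hd.2]
    calc (∑ d ∈ f.support.filter (fun d => χ d = ψ),
            (monomial (ρ d) (coeff d f) : MvPolynomial (Fin r) K))
        = ∑ d ∈ f.support.filter (fun d => χ d = ψ),
            (monomial (g ψ) (coeff d f) : MvPolynomial (Fin r) K) := by
          refine Finset.sum_congr rfl fun d hd => ?_
          rw [hconst d hd]
      _ = monomial (g ψ) (∑ d ∈ f.support.filter (fun d => χ d = ψ), coeff d f) :=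
          (map_sum (monomial (g ψ)) _ _).symm
      _ = 0 := by rw [hzero ψ hψ, map_zero]
  rw [hdecomp, h2, add_zero]
  refine Ideal.sum_mem _ fun d hd => ?_
  exact Ideal.mul_mem_right _ _ (sub_monomial_mem (Lof β T) d (ρ d) (hmem d hd))

end Hard

section Separator

variable {K : Type*} [Field K] [Fintype K] {A : Type*} [AddCommGroup A] {r : ℕ}

/-- Nullstellensatz-type separator: for a point `Q` of the torus not in `Y` there is a
homogeneous polynomial vanishing on `Y` but not at `Q`. -/
lemma separator (β : (Fin r → ℤ) →+ A)
    (Y : Set ((Fin r → Kˣ) ⧸ torusG (K := K) β)) (Q : Fin r → Kˣ)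
    (hQ : (QuotientGroup.mk Q : (Fin r → Kˣ) ⧸ torusG (K := K) β) ∉ Y) :
    ∃ f : MvPolynomial (Fin r) K, IsHomog β f ∧
      (∀ P : Fin r → Kˣ, (QuotientGroup.mk P ∈ Y) → eval (fun i => (P i : K)) f = 0) ∧
      eval (fun i => (Q i : K)) f ≠ 0 := by
  classical
  have hfin : Y.Finite := Set.toFinite Y
  have hsel : ∀ y ∈ Y, ∃ (m : Fin r → ℤ) (c : Kˣ), m ∈ β.ker ∧
      (∀ P : Fin r → Kˣ, (QuotientGroup.mk P : (Fin r → Kˣ) ⧸ torusG (K := K) β) = y →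
        charEval P m = c) ∧ charEval Q m ≠ c := by
    intro y hy
    obtain ⟨P₀, rfl⟩ := QuotientGroup.mk_surjective y
    have hne : ¬ ((QuotientGroup.mk Q : (Fin r → Kˣ) ⧸ torusG (K := K) β)
        = QuotientGroup.mk P₀) := fun h => hQ (h ▸ hy)
    rw [QuotientGroup.eq] at hne
    rw [mem_torusG] at hne
    push_neg at hne
    obtain ⟨m, hmker, hmne⟩ := hne
    refine ⟨m, charEval P₀ m, hmker, ?_, ?_⟩
    · intro P hP
      rw [QuotientGroup.eq, mem_torusG] at hP
      have h1 := hP m hmker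
      rw [charEval_mul_left, charEval_inv_left] at h1
      have := mul_eq_one_iff_inv_eq.mp h1
      rw [inv_inv] at this
      rw [← this]
    · intro hcontra
      apply hmne
      rw [charEval_mul_left, charEval_inv_left, ← hcontra, inv_mul_cancel]
  choose! m c hker hval hQne using hsel
  refine ⟨∏ y ∈ hfin.toFinset, genBinomial K (m y) (c y), ?_, ?_, ?_⟩
  · refine isHomog_prod β _ _ fun y hy => ?_
    rw [Set.Finite.mem_toFinset] at hy
    exact ⟨degOf β (expOf (m y)), isHomogOf_genBinomial β (m y) (c y) (hker y hy)⟩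
  · intro P hP
    rw [map_prod]
    refine Finset.prod_eq_zero (Set.Finite.mem_toFinset hfin |>.mpr hP) ?_
    rw [eval_genBinomial, hval _ hP P rfl, sub_self, mul_zero]
  · rw [map_prod]
    refine Finset.prod_ne_zero_iff.mpr fun y hy => ?_
    rw [Set.Finite.mem_toFinset] at hy
    rw [eval_genBinomial]
    refine mul_ne_zero (Units.ne_zero _) (sub_ne_zero.mpr ?_)
    intro hcontra
    exact hQne y hy (Units.ext hcontra)

end Separator

/-- over a finite field, the vanishing ideal of a subset `Y` of the
torus `T_X` is a lattice ideal if and only if `Y` is a subgroup of the torus. -/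
theorem stmt_2 {K : Type*} [Field K] [Fintype K] {A : Type*} [AddCommGroup A] {r : ℕ}
    (β : (Fin r → ℤ) →+ A) (hβ : Function.Surjective β)
    (Y : Set ((Fin r → Kˣ) ⧸ torusG (K := K) β)) :
    (∃ L : AddSubgroup (Fin r → ℤ), vanishingIdeal β Y = latticeIdeal K L) ↔
      (∃ H : Subgroup ((Fin r → Kˣ) ⧸ torusG (K := K) β), Y = (H : Set _)) := by
  classical
  constructor
  · -- forward: the vanishing ideal is a lattice ideal → Y is a subgroup
    rintro ⟨L, hI⟩
    have key : ∀ P : Fin r → Kˣ,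
        ((QuotientGroup.mk P : (Fin r → Kˣ) ⧸ torusG (K := K) β) ∈ Y) ↔ P ∈ annSub K L := by
      intro P
      constructor
      · intro hP
        rw [mem_annSub]
        intro m hm
        have hb : latticeBinomial K m ∈ vanishingIdeal β Y := by
          rw [hI, latticeIdeal]
          exact Ideal.subset_span ⟨m, hm, rfl⟩
        have h0 : eval (fun i => (P i : K)) (latticeBinomial K m) = 0 := by
          refine eval_eq_zero_of_mem_span ?_ hb
          rintro g ⟨_, hg⟩
          exact hg P hP
        exact (eval_latticeBinomial_eq_zero_iff P m).mp h0
      · intro hP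
        by_contra hPY
        obtain ⟨f, hhom, hv, hne⟩ := separator β Y P hPY
        have hf : f ∈ latticeIdeal K L := by
          rw [← hI, _root_.vanishingIdeal]
          exact Ideal.subset_span ⟨hhom, hv⟩
        refine hne (eval_eq_zero_of_mem_span ?_ hf)
        rintro g ⟨n, hn, rfl⟩
        exact (eval_latticeBinomial_eq_zero_iff P n).mpr (mem_annSub.mp hP n hn)
    refine ⟨(annSub K L).map (QuotientGroup.mk' (torusG (K := K) β)), ?_⟩
    ext y
    obtain ⟨P, rfl⟩ := QuotientGroup.mk_surjective y
    constructor
    · intro h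
      rw [SetLike.mem_coe, Subgroup.mem_map]
      exact ⟨P, (key P).mp h, by rw [QuotientGroup.mk'_apply]⟩
    · intro h
      rw [SetLike.mem_coe, Subgroup.mem_map] at h
      obtain ⟨Q, hQ, hQP⟩ := h
      rw [QuotientGroup.mk'_apply] at hQP
      have := (key Q).mpr hQ
      rwa [hQP] at this
  · -- backward: Y is a subgroup → the vanishing ideal is a lattice ideal
    rintro ⟨H, rfl⟩
    set T : Subgroup (Fin r → Kˣ) := H.comap (QuotientGroup.mk' (torusG (K := K) β)) with hT
    have hTmem : ∀ P : Fin r → Kˣ, P ∈ T ↔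
        (QuotientGroup.mk P : (Fin r → Kˣ) ⧸ torusG (K := K) β) ∈ H := by
      intro P
      rw [hT, Subgroup.mem_comap, QuotientGroup.mk'_apply]
    refine ⟨Lof β T, le_antisymm ?_ ?_⟩
    · -- vanishing ideal ≤ lattice ideal
      rw [_root_.vanishingIdeal]
      refine Ideal.span_le.mpr ?_
      rintro f ⟨⟨α, hα⟩, hv⟩
      refine mem_latticeIdeal_of_homog_vanishing β T hα fun P hP => ?_
      exact hv P ((hTmem P).mp hP)
    · -- lattice ideal ≤ vanishing ideal
      rw [latticeIdeal]
      refine Ideal.span_le.mpr ?_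
      rintro g ⟨m, hm, rfl⟩
      obtain ⟨hm1, hm2⟩ := mem_Lof.mp hm
      refine Ideal.subset_span ⟨isHomog_latticeBinomial β m hm1, ?_⟩
      intro P hP
      exact (eval_latticeBinomial_eq_zero_iff P m).mpr (hm2 P ((hTmem P).mpr hP))
end

section
/- Let D = diag(d₁,…,d_r) with all d_i positive integers. A set of binomial generators of the lattice ideal I_L for L = D(L'), where L' = L_{βD} is a saturated lattice, is obtained from a set of binomial generators of the toric ideal I_{L'} by substituting x_i^{d_i} for x_i in each generator. In particular, m ∈ L' if and only if Dm ∈ L, and x^{m⁺} − x^{m⁻} ∈ I_{L'} if and only if x^{(Dm)⁺} − x^{(Dm)⁻} ∈ I_L. -/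
open MvPolynomial

/-- The diagonal map `D = diag(d₁,…,d_r)` acting on `ℤ^r`. -/
def Dhom {r : ℕ} (d : Fin r → ℕ) : (Fin r → ℤ) →+ (Fin r → ℤ) where
  toFun m := fun i => (d i : ℤ) * m i
  map_zero' := by funext i; simp
  map_add' a b := by funext i; simp [mul_add]

/-!
The lattice ideal `I_M` lies in the kernel of the ring map `x^s ↦ [s]` into the group algebra
`K[ℤ^r ⧸ M]`, and this map sends `F_m` to `[m⁺] - [m⁻]`, which vanishes only for `m ∈ M`; hence
`F_m ∈ I_M ↔ m ∈ M`. The substitution `xᵢ ↦ xᵢ^{dᵢ}` sends `x^{m⁺}` to `x^{(Dm)⁺}` because `D` is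
diagonal with nonnegative entries, so it maps the generators `F_m` (`m ∈ L'`) of `I_{L'}` onto
the generators `F_{Dm}` of `I_{D(L')}`, and thus maps any generating set of `I_{L'}` to one of
`I_{D(L')}`. Finally `D` is injective since every `dᵢ` is positive.
-/

section LatticeIdeal

variable {K : Type*} [Field K] {r : ℕ}

lemma latticeIdeal_eq_span_image (L : AddSubgroup (Fin r → ℤ)) :
    latticeIdeal K L = Ideal.span (latticeBinomial K '' L) := by
  rw [latticeIdeal]
  congr 1
  ext f
  simp [eq_comm]

/-- The monomial map `x^s ↦ [s]` into the group algebra of `ℤ^r ⧸ M`. -/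
noncomputable def toQuotientGroupAlgebra (K : Type*) [Field K] (M : AddSubgroup (Fin r → ℤ)) :
    MvPolynomial (Fin r) K →+* AddMonoidAlgebra K ((Fin r → ℤ) ⧸ M) :=
  AddMonoidAlgebra.mapDomainRingHom K <| (QuotientAddGroup.mk' M).comp <|
    Finsupp.coeFnAddHom.comp (Finsupp.mapRange.addMonoidHom (Nat.castAddMonoidHom ℤ))

lemma toQuotientGroupAlgebra_monomial_expOf (M : AddSubgroup (Fin r → ℤ)) (m : Fin r → ℤ) :
    toQuotientGroupAlgebra K M (monomial (expOf m) 1) =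
      AddMonoidAlgebra.single (QuotientAddGroup.mk (fun i => ((m i).toNat : ℤ))) 1 := by
  rw [← single_eq_monomial, toQuotientGroupAlgebra, AddMonoidAlgebra.mapDomainRingHom_apply,
    AddMonoidAlgebra.mapDomain_single]
  rfl

lemma toQuotientGroupAlgebra_latticeBinomial_eq_zero_iff (M : AddSubgroup (Fin r → ℤ))
    (m : Fin r → ℤ) :
    toQuotientGroupAlgebra K M (latticeBinomial K m) = 0 ↔ m ∈ M := by
  have hm : (fun i => ((m i).toNat : ℤ)) - (fun i => ((-m i).toNat : ℤ)) = m :=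
    funext fun i => Int.toNat_sub_toNat_neg (m i)
  rw [latticeBinomial, map_sub, sub_eq_zero, toQuotientGroupAlgebra_monomial_expOf,
    toQuotientGroupAlgebra_monomial_expOf, AddMonoidAlgebra.single_left_inj one_ne_zero,
    QuotientAddGroup.eq_iff_sub_mem]
  simp only [Pi.neg_apply, hm]

lemma latticeIdeal_le_ker_toQuotientGroupAlgebra (M : AddSubgroup (Fin r → ℤ)) :
    latticeIdeal K M ≤ RingHom.ker (toQuotientGroupAlgebra K M) := by
  rw [latticeIdeal_eq_span_image, Ideal.span_le]
  rintro _ ⟨m, hm, rfl⟩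
  exact (toQuotientGroupAlgebra_latticeBinomial_eq_zero_iff M m).mpr hm

theorem latticeBinomial_mem_latticeIdeal_iff (M : AddSubgroup (Fin r → ℤ)) (m : Fin r → ℤ) :
    latticeBinomial K m ∈ latticeIdeal K M ↔ m ∈ M :=
  ⟨fun h => (toQuotientGroupAlgebra_latticeBinomial_eq_zero_iff M m).mp
      (latticeIdeal_le_ker_toQuotientGroupAlgebra M h),
    fun h => Ideal.subset_span ⟨m, h, rfl⟩⟩

lemma Int.toNat_natCast_mul (a : ℕ) (b : ℤ) : ((a : ℤ) * b).toNat = a * b.toNat := by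
  rcases le_total 0 b with hb | hb
  · lift b to ℕ using hb
    rw [← Nat.cast_mul, Int.toNat_natCast, Int.toNat_natCast]
  · have hab : (a : ℤ) * b ≤ 0 := mul_nonpos_of_nonneg_of_nonpos (Nat.cast_nonneg a) hb
    rw [Int.toNat_of_nonpos hb, Int.toNat_of_nonpos hab, mul_zero]

lemma expOf_Dhom_apply (d : Fin r → ℕ) (m : Fin r → ℤ) (i : Fin r) :
    expOf (Dhom d m) i = d i * expOf m i :=
  Int.toNat_natCast_mul (d i) (m i)

lemma aeval_X_pow_monomial_expOf (d : Fin r → ℕ) (m : Fin r → ℤ) :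
    aeval (fun i => (X i : MvPolynomial (Fin r) K) ^ d i) (monomial (expOf m) (1 : K)) =
      monomial (expOf (Dhom d m)) 1 := by
  rw [aeval_monomial, monomial_eq, map_one, C_1, one_mul, one_mul, Finsupp.prod_pow,
    Finsupp.prod_pow]
  simp only [← pow_mul, expOf_Dhom_apply]

theorem aeval_X_pow_latticeBinomial (d : Fin r → ℕ) (m : Fin r → ℤ) :
    aeval (fun i => (X i : MvPolynomial (Fin r) K) ^ d i) (latticeBinomial K m) =
      latticeBinomial K (Dhom d m) := by
  rw [latticeBinomial, latticeBinomial, map_sub, aeval_X_pow_monomial_expOf,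
    aeval_X_pow_monomial_expOf, map_neg]

theorem latticeIdeal_map_Dhom (d : Fin r → ℕ) (L : AddSubgroup (Fin r → ℤ)) :
    latticeIdeal K (L.map (Dhom d)) =
      (latticeIdeal K L).map (aeval fun i => (X i : MvPolynomial (Fin r) K) ^ d i) := by
  rw [latticeIdeal_eq_span_image, latticeIdeal_eq_span_image, Ideal.map_span,
    AddSubgroup.coe_map, Set.image_image, Set.image_image]
  simp only [aeval_X_pow_latticeBinomial]

end LatticeIdeal

lemma Dhom_injective {r : ℕ} {d : Fin r → ℕ} (hd : ∀ i, 0 < d i) :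
    Function.Injective (Dhom d) := fun _ _ hab =>
  funext fun i => mul_left_cancel₀ (Int.natCast_ne_zero.mpr (hd i).ne') (congrFun hab i)

/-- for `L' = Ker(β∘D)` and `L = D(L')`, binomial generators of `I_L`
are obtained from binomial generators of `I_{L'}` by substituting `xᵢ^{dᵢ}` for
`xᵢ`; in particular `m ∈ L' ↔ Dm ∈ L` and `F_m ∈ I_{L'} ↔ F_{Dm} ∈ I_L`, and the
substitution sends `F_m` to `F_{Dm}`. -/
theorem stmt_12 {K : Type*} [Field K] {A : Type*} [AddCommGroup A] {r : ℕ}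
    (β : (Fin r → ℤ) →+ A) (d : Fin r → ℕ) (hd : ∀ i, 0 < d i) :
    (∀ m : Fin r → ℤ, m ∈ AddMonoidHom.ker (β.comp (Dhom d)) ↔
        Dhom d m ∈ AddSubgroup.map (Dhom d) (AddMonoidHom.ker (β.comp (Dhom d)))) ∧
    (∀ m : Fin r → ℤ,
        aeval (fun i => (X i : MvPolynomial (Fin r) K) ^ (d i)) (latticeBinomial K m) =
          latticeBinomial K (Dhom d m)) ∧
    (∀ m : Fin r → ℤ,
        latticeBinomial K m ∈ latticeIdeal K (AddMonoidHom.ker (β.comp (Dhom d))) ↔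
        latticeBinomial K (Dhom d m) ∈
          latticeIdeal K (AddSubgroup.map (Dhom d) (AddMonoidHom.ker (β.comp (Dhom d))))) ∧
    (∀ S' : Set (Fin r → ℤ), (∀ m ∈ S', m ∈ AddMonoidHom.ker (β.comp (Dhom d))) →
        latticeIdeal K (AddMonoidHom.ker (β.comp (Dhom d))) =
          Ideal.span ((latticeBinomial K) '' S') →
        latticeIdeal K (AddSubgroup.map (Dhom d) (AddMonoidHom.ker (β.comp (Dhom d)))) =
          Ideal.span ((fun m => latticeBinomial K (Dhom d m)) '' S')) := by
  have hmem (m : Fin r → ℤ) :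
      m ∈ (β.comp (Dhom d)).ker ↔ Dhom d m ∈ (β.comp (Dhom d)).ker.map (Dhom d) :=
    (AddSubgroup.mem_map_iff_mem (Dhom_injective hd)).symm
  refine ⟨hmem, aeval_X_pow_latticeBinomial d, fun m => ?_, fun S' _ hI => ?_⟩
  · simp only [latticeBinomial_mem_latticeIdeal_iff, hmem]
  · rw [latticeIdeal_map_Dhom, hI, Ideal.map_span, Set.image_image]
    simp only [aeval_X_pow_latticeBinomial]
end
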